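/- Let S be a Dedekind scheme with function field K and X_K a proper smooth connected curve of positive genus over K admitting a Néron model X_sm over S (the smooth locus of the minimal regular model). If Y is a proper smooth S-scheme and f_K : Y_K → X_K is a dominant K-morphism, then X_K has good reduction over S, i.e. admits a proper smooth model. -/

import Mathlib

/-!
The Néron mapping property extends `f_K` to `h : Y ⟶ X_sm`. Since `Y` is proper and `X_sm` is
separated over `S`, `h` is universally closed, so its image is a closed set containing the dense
image of `Y_K`, hence the whole generic fiber. As `X_sm` is flat over `S`, every point of `X_sm`
specializes from a point of the generic fiber, so `h` is surjective and `X_sm ⟶ S` inherits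
universal closedness from `Y ⟶ S`: the Néron model itself is proper and smooth.
-/

open AlgebraicGeometry CategoryTheory CategoryTheory.Limits TopologicalSpace

universe u

namespace NeronPaper

/-- A morphism of schemes is smooth at a point `x` if there are affine opens as in
`AlgebraicGeometry.IsSmooth` around `x`. -/
def SmoothAt {X Y : Scheme.{u}} (f : X ⟶ Y) (x : X) : Prop :=
  ∃ (U : Y.affineOpens) (V : X.affineOpens) (_ : x ∈ V.1) (e : V.1 ≤ f ⁻¹ᵁ U.1),
    RingHom.IsStandardSmooth (f.appLE U V e).hom

/-- The smooth locus of a morphism of schemes. -/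
def smoothLocus {X Y : Scheme.{u}} (f : X ⟶ Y) : Set X := {x | SmoothAt f x}

lemma smoothLocus_isOpen {X Y : Scheme.{u}} (f : X ⟶ Y) : IsOpen (smoothLocus f) := by
  rw [isOpen_iff_forall_mem_open]
  rintro x ⟨U, V, hxV, e, hs⟩
  exact ⟨V.1, fun y hy => ⟨U, V, hy, e, hs⟩, V.1.2, hxV⟩

/-- A morphism of schemes is flat if all stalk maps are flat ring maps. -/
def SchemeFlat {X Y : Scheme.{u}} (f : X ⟶ Y) : Prop := ∀ x : X, (f.stalkMap x).hom.Flat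

/-- A (noetherian) local ring is regular if its maximal ideal is generated by
(Krull dimension) many elements. -/
def IsRegularLocalRingP (A : Type u) [CommRing A] [IsLocalRing A] : Prop :=
  IsNoetherianRing A ∧ ∃ s : Finset A,
    Ideal.span (s : Set A) = IsLocalRing.maximalIdeal A ∧ (s.card : WithBot ℕ∞) = ringKrullDim A

/-- A scheme is regular if all its stalks are regular local rings. -/
def IsRegularScheme (X : Scheme.{u}) : Prop :=
  ∀ x : X, IsRegularLocalRingP (X.presheaf.stalk x)

/-- A Dedekind scheme: noetherian, regular, connected (hence integral), of dimension 1. -/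
structure IsDedekindScheme (S : Scheme.{u}) : Prop where
  locallyNoetherian : IsLocallyNoetherian S
  compact : CompactSpace S
  integral : IsIntegral S
  regular : IsRegularScheme S
  dimOne : topologicalKrullDim S = 1

/-- `f : X ⟶ S` is a Néron lft-model (of its generic fiber, taken at the point `η` of `S`):
a smooth separated flat model, locally of finite type, such that every morphism from the
generic fiber of a smooth `S`-scheme `Y` to the generic fiber of `X`, over the generic point,
extends uniquely to an `S`-morphism `Y ⟶ X`. -/
def IsNeronLftModelAt {X S : Scheme.{u}} (f : X ⟶ S) (η : S) : Prop :=
  IsSmooth f ∧ IsSeparated f ∧ LocallyOfFiniteType f ∧ SchemeFlat f ∧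
  ∀ (Y : Scheme.{u}) (g : Y ⟶ S), IsSmooth g →
    ∀ φ : pullback g (S.fromSpecStalk η) ⟶ pullback f (S.fromSpecStalk η),
      φ ≫ pullback.snd f (S.fromSpecStalk η) = pullback.snd g (S.fromSpecStalk η) →
      ∃! h : Y ⟶ X, h ≫ f = g ∧
        pullback.fst g (S.fromSpecStalk η) ≫ h = φ ≫ pullback.fst f (S.fromSpecStalk η)


attribute [local instance] MvPolynomial.gradedAlgebra

/-- The projective line over a commutative ring. -/
noncomputable def P1 (R : Type u) [CommRing R] : Scheme.{u} :=
  Proj (MvPolynomial.homogeneousSubmodule (Fin 2) R)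

lemma Scheme.Hom.range_subset_range_of_denseRange {A B X Y : Scheme.{u}} {p : A ⟶ X}
    {φ : B ⟶ A} {q : B ⟶ Y} {h : Y ⟶ X} [UniversallyClosed h] (hφ : DenseRange φ)
    (w : q ≫ h = φ ≫ p) : Set.range p ⊆ Set.range h := by
  have hφp : p '' Set.range φ ⊆ Set.range h := by
    rintro _ ⟨_, ⟨b, rfl⟩, rfl⟩
    exact ⟨q b, by rw [← Scheme.Hom.comp_apply, w, Scheme.Hom.comp_apply]⟩
  exact (p.continuous.range_subset_closure_image_dense hφ).trans <|
    closure_minimal hφp h.isClosedMap.isClosed_range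

lemma Flat.eq_univ_of_isClosed_of_range_fst_fromSpecStalk_genericPoint_subset
    {X S : Scheme.{u}} [IrreducibleSpace S] (f : X ⟶ S) [Flat f] {Z : Set X} (hZ : IsClosed Z)
    (hgen : Set.range (pullback.fst f (S.fromSpecStalk (genericPoint S))) ⊆ Z) :
    Z = Set.univ := by
  refine Set.eq_univ_of_forall fun x => ?_
  obtain ⟨x', hx'x, hfx'⟩ := Flat.generalizingMap f (genericPoint_specializes (f x))
  have hx'_gen : x' ∈ Set.range (pullback.fst f (S.fromSpecStalk (genericPoint S))) := by
    rw [Scheme.Pullback.range_fst, Scheme.range_fromSpecStalk]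
    exact hfx' ▸ specializes_rfl
  exact hZ.stableUnderSpecialization hx'x (hgen hx'_gen)

theorem good_reduction_of_dominant_from_proper_smooth_general
    {S Xsm Y : Scheme.{u}} [IrreducibleSpace S]
    (f : Xsm ⟶ S) (hN : IsNeronLftModelAt f (genericPoint S))
    (g : Y ⟶ S) [IsProper g] [Smooth g]
    (φK : pullback g (S.fromSpecStalk (genericPoint S)) ⟶
          pullback f (S.fromSpecStalk (genericPoint S)))
    (hφ : φK ≫ pullback.snd f (S.fromSpecStalk (genericPoint S)) =
          pullback.snd g (S.fromSpecStalk (genericPoint S)))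
    (hdom : DenseRange φK.base) :
    ∃ (Z : Scheme.{u}) (h : Z ⟶ S), IsProper h ∧ IsSmooth h ∧
      ∃ e : pullback h (S.fromSpecStalk (genericPoint S)) ≅
            pullback f (S.fromSpecStalk (genericPoint S)),
        e.hom ≫ pullback.snd f (S.fromSpecStalk (genericPoint S)) =
          pullback.snd h (S.fromSpecStalk (genericPoint S)) := by
  obtain ⟨hsmooth, hsep, hlft, -, hext⟩ := hN
  have : Smooth f := hsmooth
  obtain ⟨h, ⟨hhf, hhφ⟩, -⟩ := hext Y g ‹Smooth g› φK hφ
  have : UniversallyClosed (h ≫ f) := hhf ▸ inferInstance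
  have : UniversallyClosed h := .of_comp_of_isSeparated h f
  have : Surjective h := ⟨Set.range_eq_univ.mp <|
    Flat.eq_univ_of_isClosed_of_range_fst_fromSpecStalk_genericPoint_subset f
      h.isClosedMap.isClosed_range (Scheme.Hom.range_subset_range_of_denseRange hdom hhφ)⟩
  have : UniversallyClosed f := .of_comp_surjective h f
  exact ⟨Xsm, f, {}, hsmooth, Iso.refl _, Category.id_comp _⟩

/-- let `X_sm` be the Néron model over a Dedekind scheme `S` of a proper
smooth connected curve `X_K` of positive genus (positivity of the genus encoded by: no
geometric fiber of the generic fiber is isomorphic to `ℙ¹`).  If a proper smooth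
`S`-scheme `Y` admits a dominant `K`-morphism from its generic fiber to `X_K`, then
`X_K` has good reduction: it admits a proper smooth model over `S`. -/
theorem good_reduction_of_dominant_from_proper_smooth
    {S Xsm Y : Scheme.{u}} [IrreducibleSpace S] (hS : IsDedekindScheme S)
    (f : Xsm ⟶ S) (hN : IsNeronLftModelAt f (genericPoint S)) (hft : QuasiCompact f)
    (hKproper : IsProper (pullback.snd f (S.fromSpecStalk (genericPoint S))))
    (hKconn : ConnectedSpace ↥(pullback f (S.fromSpecStalk (genericPoint S))))
    (hKdim : topologicalKrullDim ↥(pullback f (S.fromSpecStalk (genericPoint S))) = 1)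
    (hgenus : ∀ (L : Type u) (_ : Field L) (_ : IsAlgClosed L)
      (φ : S.presheaf.stalk (genericPoint S) ⟶ CommRingCat.of L),
      IsEmpty ((pullback (pullback.snd f (S.fromSpecStalk (genericPoint S)))
        (Spec.map φ)) ≅ P1 L))
    (g : Y ⟶ S) [IsProper g] [Smooth g]
    (φK : pullback g (S.fromSpecStalk (genericPoint S)) ⟶
          pullback f (S.fromSpecStalk (genericPoint S)))
    (hφ : φK ≫ pullback.snd f (S.fromSpecStalk (genericPoint S)) =
          pullback.snd g (S.fromSpecStalk (genericPoint S)))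
    (hdom : DenseRange φK.base) :
    ∃ (Z : Scheme.{u}) (h : Z ⟶ S), IsProper h ∧ IsSmooth h ∧
      ∃ e : pullback h (S.fromSpecStalk (genericPoint S)) ≅
            pullback f (S.fromSpecStalk (genericPoint S)),
        e.hom ≫ pullback.snd f (S.fromSpecStalk (genericPoint S)) =
          pullback.snd h (S.fromSpecStalk (genericPoint S)) :=
  good_reduction_of_dominant_from_proper_smooth_general f hN g φK hφ hdom

end NeronPaper
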